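/- arXiv:alg-geom/9411013 — 3 statements merged into one kernel-verified Lean document; each statement's English description precedes it below -/
import Mathlib

section
/- (Theorem 2.2, Golumbic) Let G = (V,E) be a comparability graph, A an implication class of G, and E′ a transitive orientation of E. Then either E′ ∩ Â = A or E′ ∩ Â = A⁻¹, and in either case A ∩ A⁻¹ = ∅. -/
open Set

namespace TransOrient

variable {V : Type*}

/-- `E` is the edge set of an undirected graph on the vertex type `V`:
an irreflexive and symmetric relation, given as a set of ordered pairs. -/
def IsGraph (E : Set (V × V)) : Prop :=
  (∀ a : V, (a, a) ∉ E) ∧ (∀ a b : V, (a, b) ∈ E ↔ (b, a) ∈ E)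

/-- The forcing relation `Γ` on directed edges:
`(a,b) Γ (a',b')` iff (`a = a'` and `(b,b') ∉ E`) or (`b = b'` and `(a,a') ∉ E`). -/
def Gamma (E : Set (V × V)) (e e' : V × V) : Prop :=
  e ∈ E ∧ e' ∈ E ∧
    ((e.1 = e'.1 ∧ (e.2, e'.2) ∉ E) ∨ (e.2 = e'.2 ∧ (e.1, e'.1) ∉ E))

/-- The implication classes of `G = (V,E)`: equivalence classes on `E` of
the reflexive-transitive closure of `Γ`. -/
def IsImplicationClass (E : Set (V × V)) (A : Set (V × V)) : Prop :=
  ∃ e ∈ E, A = {e' | Relation.ReflTransGen (Gamma E) e e'}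

/-- `A⁻¹ = {(b,a) : (a,b) ∈ A}`. -/
def inv (A : Set (V × V)) : Set (V × V) := {p | (p.2, p.1) ∈ A}

/-- The color class `Â = A ∪ A⁻¹` of an implication class `A`. -/
def hat (A : Set (V × V)) : Set (V × V) := A ∪ inv A

/-- `Ã`: the set of vertices incident to an edge of `A`. -/
def tilde (A : Set (V × V)) : Set V := {v | ∃ w, (v, w) ∈ A ∨ (w, v) ∈ A}

/-- A transitive orientation `E'` of a symmetric edge set `F`:
`E' ⊆ F`, `E' ∩ E'⁻¹ = ∅`, `E' ∪ E'⁻¹ = F` and `E'` is transitive. -/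
def IsTransOrientation (F E' : Set (V × V)) : Prop :=
  E' ⊆ F ∧ E' ∩ inv E' = ∅ ∧ E' ∪ inv E' = F ∧
    ∀ a b c : V, (a, b) ∈ E' → (b, c) ∈ E' → (a, c) ∈ E'

/-- `G` is a comparability graph if `E` admits a transitive orientation. -/
def IsComparability (E : Set (V × V)) : Prop :=
  ∃ E' : Set (V × V), IsTransOrientation E E'

/-- `E(X)`: the set of edges of `E` with both endpoints in `X`. -/
def edgesOn (E : Set (V × V)) (X : Set V) : Set (V × V) :=
  {p ∈ E | p.1 ∈ X ∧ p.2 ∈ X}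

/-- `X` is a partitive set of `G = (V,E)`. -/
def IsPartitive (E : Set (V × V)) (X : Set V) : Prop :=
  ∀ a ∈ X, ∀ b ∈ X, ∀ c ∉ X, ((a, c) ∈ E ↔ (b, c) ∈ E)

/-- `X` is a "strong" partitive set of `G = (V,E)`. -/
def IsStrongPartitive (E : Set (V × V)) (X : Set V) : Prop :=
  IsPartitive E X ∧
    ∀ Y : Set V, IsPartitive E Y → (Y ∩ X).Nonempty → X ⊆ Y ∨ Y ⊆ X

/-- `X` is a maximal "strong" partitive set of `G = (V,E)`: a strong partitive
set different from `V` which is maximal, for inclusion, among the strong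
partitive sets different from `V`. -/
def IsMaxStrongPartitive (E : Set (V × V)) (X : Set V) : Prop :=
  IsStrongPartitive E X ∧ X ≠ Set.univ ∧
    ∀ Y : Set V, IsStrongPartitive E Y → Y ≠ Set.univ → X ⊆ Y → X = Y

/-- `X` is a partitive set of the induced subgraph `G(W) = (W, E(W))`. -/
def IsPartitiveIn (E : Set (V × V)) (W : Set V) (X : Set V) : Prop :=
  X ⊆ W ∧ ∀ a ∈ X, ∀ b ∈ X, ∀ c ∈ W \ X,
    ((a, c) ∈ edgesOn E W ↔ (b, c) ∈ edgesOn E W)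

/-- `X` is a "strong" partitive set of the induced subgraph `G(W)`. -/
def IsStrongPartitiveIn (E : Set (V × V)) (W : Set V) (X : Set V) : Prop :=
  IsPartitiveIn E W X ∧
    ∀ Y : Set V, IsPartitiveIn E W Y → (Y ∩ X).Nonempty → X ⊆ Y ∨ Y ⊆ X

/-- `X` is a maximal "strong" partitive set of the induced subgraph `G(W)`. -/
def IsMaxStrongPartitiveIn (E : Set (V × V)) (W : Set V) (X : Set V) : Prop :=
  IsStrongPartitiveIn E W X ∧ X ≠ W ∧
    ∀ Y : Set V, IsStrongPartitiveIn E W Y → Y ≠ W → X ⊆ Y → X = Y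

/-- Two directed edges lie in the same color class of `G = (V,E)`. -/
def SameColor (E : Set (V × V)) (e e' : V × V) : Prop :=
  ∃ A : Set (V × V), IsImplicationClass E A ∧ e ∈ hat A ∧ e' ∈ hat A

/-- A simplex of `G = (V,E)` given by its (finite, nonempty) vertex set `VS`:
a complete induced subgraph whose edges, for distinct unordered pairs,
lie in distinct color classes of `G`. -/
def IsSimplex (E : Set (V × V)) (VS : Set V) : Prop :=
  VS.Finite ∧ VS.Nonempty ∧
    (∀ a ∈ VS, ∀ b ∈ VS, a ≠ b → (a, b) ∈ E) ∧
    (∀ a ∈ VS, ∀ b ∈ VS, ∀ c ∈ VS, ∀ d ∈ VS, a ≠ b → c ≠ d →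
      SameColor E (a, b) (c, d) → (a = c ∧ b = d) ∨ (a = d ∧ b = c))

/-- The rank of a simplex on `r+1` vertices is `r`. -/
noncomputable def simplexRank (VS : Set V) : ℕ := VS.ncard - 1

/-- A maximal simplex: its vertex set is not properly contained in the
vertex set of another simplex. -/
def IsMaxSimplex (E : Set (V × V)) (VS : Set V) : Prop :=
  IsSimplex E VS ∧ ∀ VS' : Set V, IsSimplex E VS' → VS ⊆ VS' → VS = VS'

/-- The multiplex `M(S)` generated by a simplex with vertex set `VS`:
the union of all color classes of `G` containing an edge of the simplex. -/
def multiplex (E : Set (V × V)) (VS : Set V) : Set (V × V) :=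
  {e | ∃ A : Set (V × V), IsImplicationClass E A ∧ e ∈ hat A ∧
    ∃ a ∈ VS, ∃ b ∈ VS, a ≠ b ∧ (a, b) ∈ hat A}

/-- A maximal multiplex of `G`: a multiplex generated by a maximal simplex. -/
def IsMaxMultiplex (E : Set (V × V)) (M : Set (V × V)) : Prop :=
  ∃ VS : Set V, IsMaxSimplex E VS ∧ M = multiplex E VS

/-- `P` is a partition of the set `W`. -/
def IsPartitionOf (W : Set V) (P : Set (Set V)) : Prop :=
  (∀ X ∈ P, X.Nonempty) ∧ ⋃₀ P = W ∧
    ∀ X ∈ P, ∀ Y ∈ P, X ≠ Y → X ∩ Y = ∅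

/-- Adjacency in the quotient of the induced subgraph `G(W)` by a partition:
two distinct blocks are adjacent iff some pair of representatives is an
edge of `E(W)`. -/
def quotAdj (E : Set (V × V)) (W : Set V) (X Y : Set V) : Prop :=
  X ≠ Y ∧ ∃ x ∈ X, ∃ y ∈ Y, (x, y) ∈ edgesOn E W

/-- A partitive set of an abstract graph with vertex set `W` and adjacency
relation `Adj`. -/
def IsPartitiveGen {α : Type*} (W : Set α) (Adj : α → α → Prop) (X : Set α) : Prop :=
  X ⊆ W ∧ ∀ a ∈ X, ∀ b ∈ X, ∀ c ∈ W \ X, (Adj a c ↔ Adj b c)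

/-- An abstract graph `(W, Adj)` is indecomposable if all its partitive
sets are trivial. -/
def IndecomposableGen {α : Type*} (W : Set α) (Adj : α → α → Prop) : Prop :=
  ∀ X : Set α, IsPartitiveGen W Adj X → X.Subsingleton ∨ X = W

/-- An isomorphism between the graphs `(Vα, Aα)` and `(Vβ, Aβ)`:
a bijection of the vertex sets preserving adjacency in both directions. -/
def GraphIso {α β : Type*} (Vα : Set α) (Aα : α → α → Prop)
    (Vβ : Set β) (Aβ : β → β → Prop) : Prop :=
  ∃ f : α → β, Set.BijOn f Vα Vβ ∧
    ∀ a ∈ Vα, ∀ b ∈ Vα, (Aα a b ↔ Aβ (f a) (f b))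

/-- `(V', E')` is a subgraph of the induced subgraph `G(W)` of `G = (V,E)`. -/
def IsSubgraphOf (E : Set (V × V)) (W : Set V) (V' : Set V) (E' : Set (V × V)) : Prop :=
  V' ⊆ W ∧ E' ⊆ edgesOn E W ∧ (∀ e ∈ E', e.1 ∈ V' ∧ e.2 ∈ V') ∧
    (∀ a b : V, (a, b) ∈ E' ↔ (b, a) ∈ E')

/-- `Γ` is compatible with swapping both edges. -/
lemma gamma_swap {E : Set (V × V)} (hG : IsGraph E) {e f : V × V}
    (h : Gamma E e f) : Gamma E (e.2, e.1) (f.2, f.1) := by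
  obtain ⟨he, hf, hor⟩ := h
  refine ⟨(hG.2 _ _).2 (by simpa using he), (hG.2 _ _).2 (by simpa using hf), ?_⟩
  rcases hor with ⟨h1, h2⟩ | ⟨h1, h2⟩
  · exact Or.inr ⟨h1, h2⟩
  · exact Or.inl ⟨h1, h2⟩

lemma rtg_swap {E : Set (V × V)} (hG : IsGraph E) {e f : V × V}
    (h : Relation.ReflTransGen (Gamma E) e f) :
    Relation.ReflTransGen (Gamma E) (e.2, e.1) (f.2, f.1) := by
  induction h with
  | refl => exact Relation.ReflTransGen.refl
  | tail _ hstep ih => exact ih.tail (gamma_swap hG hstep)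

/-- A transitive orientation is closed under one `Γ`-step. -/
lemma step_closure {E E' : Set (V × V)} (hG : IsGraph E)
    (hE' : IsTransOrientation E E') {e f : V × V}
    (he : e ∈ E') (h : Gamma E e f) : f ∈ E' := by
  obtain ⟨hsub, hdisj, hunion, htrans⟩ := hE'
  obtain ⟨heE, hfE, hor⟩ := h
  have hf' : f ∈ E' ∪ inv E' := by rw [hunion]; exact hfE
  rcases hf' with hf' | hf'
  · exact hf'
  · -- f⁻¹ ∈ E', derive a contradiction
    exfalso
    have hfr : (f.2, f.1) ∈ E' := hf'
    have he' : (e.1, e.2) ∈ E' := he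
    rcases hor with ⟨h1, h2⟩ | ⟨h1, h2⟩
    · -- e.1 = f.1, (e.2, f.2) ∉ E
      have : (f.2, e.2) ∈ E' := htrans f.2 f.1 e.2 hfr (by rw [← h1]; exact he')
      exact h2 ((hG.2 _ _).2 (hsub this))
    · -- e.2 = f.2, (e.1, f.1) ∉ E
      have : (e.1, f.1) ∈ E' := htrans e.1 e.2 f.1 he' (by rw [h1]; exact hfr)
      exact h2 (hsub this)

lemma rtg_closure {E E' : Set (V × V)} (hG : IsGraph E)
    (hE' : IsTransOrientation E E') {e f : V × V}
    (he : e ∈ E') (h : Relation.ReflTransGen (Gamma E) e f) : f ∈ E' := by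
  induction h with
  | refl => exact he
  | tail _ hstep ih => exact step_closure hG hE' ih hstep

end TransOrient
open TransOrient in
/-- **(Theorem 2.2, Golumbic)** Let `G = (V,E)` be a comparability graph, `A` an
implication class of `G`, and `E'` a transitive orientation of `E`. Then either
`E' ∩ Â = A` or `E' ∩ Â = A⁻¹`, and in either case `A ∩ A⁻¹ = ∅`. -/
theorem golumbic_orientation_meets_color_class
    {V : Type*} (E : Set (V × V)) (hG : IsGraph E)
    (hcomp : IsComparability E)
    (A : Set (V × V)) (hA : IsImplicationClass E A)
    (E' : Set (V × V)) (hE' : IsTransOrientation E E') :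
    (E' ∩ hat A = A ∨ E' ∩ hat A = inv A) ∧ A ∩ inv A = ∅ := by
  obtain ⟨e, heE, rfl⟩ := hA
  obtain ⟨hsub, hdisj, hunion, htrans⟩ := hE'
  have hE'full : IsTransOrientation E E' := ⟨hsub, hdisj, hunion, htrans⟩
  have hdisj' : ∀ f : V × V, f ∈ E' → (f.2, f.1) ∈ E' → False := by
    intro f hf hfr
    have : f ∈ E' ∩ inv E' := ⟨hf, hfr⟩
    rw [hdisj] at this
    exact this
  by_cases he : e ∈ E'
  · -- A ⊆ E'
    have hAsub : ∀ f, Relation.ReflTransGen (Gamma E) e f → f ∈ E' := fun f h =>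
      rtg_closure hG hE'full he h
    constructor
    · left
      apply Set.Subset.antisymm
      · rintro f ⟨hfE', hf | hf⟩
        · exact hf
        · exfalso
          exact hdisj' f hfE' (hAsub _ hf)
      · intro f hf
        exact ⟨hAsub f hf, Or.inl hf⟩
    · ext f
      simp only [Set.mem_inter_iff, Set.mem_empty_iff_false, iff_false]
      rintro ⟨hf, hf'⟩
      exact hdisj' f (hAsub f hf) (hAsub _ hf')
  · -- e⁻¹ ∈ E'
    have her : (e.2, e.1) ∈ E' := by
      have : e ∈ E' ∪ inv E' := by rw [hunion]; exact heE
      rcases this with h | h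
      · exact absurd h he
      · exact h
    -- f ∈ A → f⁻¹ ∈ E'
    have hAinv : ∀ f, Relation.ReflTransGen (Gamma E) e f → (f.2, f.1) ∈ E' := by
      intro f h
      exact rtg_closure hG hE'full her (rtg_swap hG h)
    have hinvA : ∀ f : V × V, Relation.ReflTransGen (Gamma E) e (f.2, f.1) → f ∈ E' := by
      intro f h
      have := hAinv _ h
      simpa using this
    constructor
    · right
      apply Set.Subset.antisymm
      · rintro f ⟨hfE', hf | hf⟩
        · exact absurd hfE' (fun h => hdisj' f h (hAinv f hf))
        · exact hf
      · intro f hf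
        exact ⟨hinvA f hf, Or.inr hf⟩
    · ext f
      simp only [Set.mem_inter_iff, Set.mem_empty_iff_false, iff_false]
      rintro ⟨hf, hf'⟩
      exact hdisj' f (hinvA f hf') (hAinv f hf)
end

section
/- (Theorem 2.4, Golumbic) Let A be an implication class of an undirected graph G = (V,E). Then exactly one of the following holds: (i) A = A⁻¹ = Â and Â admits no transitive orientation; (ii) A ∩ A⁻¹ = ∅, and both A and A⁻¹ are transitive orientations of Â. -/
open Set

namespace TransOrient

variable {V : Type*}

/-!
`Γ*` is an equivalence relation on `E` that commutes with reversing edges, so an implication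
class `A` meeting `A⁻¹` equals `A⁻¹`. A transitive orientation is closed under `Γ`, hence contains
`A` as soon as it meets it; an orientation of `A = A⁻¹` would then contain an edge together with
its reverse. If `A ∩ A⁻¹ = ∅`, transitivity of `A` is the Triangle Lemma: for `(a, b), (b, c) ∈ A`
with `(a, c) ∉ A`, walk `(b, c)` through `A` to `(a, b)`; the apex `a` stays joined to the moving
edge by an edge of `A` and an edge of the class of `(a, c)`, which ends with the loop `(a, a)`.
-/

open Relation

section Forcing

variable {V : Type*} {E : Set (V × V)}

theorem Gamma.symm (hG : IsGraph E) {e e' : V × V} (h : Gamma E e e') : Gamma E e' e := by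
  obtain ⟨he, he', ⟨h1, h2⟩ | ⟨h1, h2⟩⟩ := h
  · exact ⟨he', he, .inl ⟨h1.symm, fun h => h2 ((hG.2 _ _).mp h)⟩⟩
  · exact ⟨he', he, .inr ⟨h1.symm, fun h => h2 ((hG.2 _ _).mp h)⟩⟩

theorem Gamma.swap (hG : IsGraph E) {e e' : V × V} (h : Gamma E e e') :
    Gamma E e.swap e'.swap := by
  obtain ⟨he, he', h | h⟩ := h
  · exact ⟨(hG.2 _ _).mp he, (hG.2 _ _).mp he', .inr h⟩
  · exact ⟨(hG.2 _ _).mp he, (hG.2 _ _).mp he', .inl h⟩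

theorem reflTransGen_gamma_symm (hG : IsGraph E) {e e' : V × V}
    (h : ReflTransGen (Gamma E) e e') : ReflTransGen (Gamma E) e' e := by
  induction h with
  | refl => rfl
  | tail _ hstep ih => exact ih.head (hstep.symm hG)

theorem reflTransGen_gamma_swap (hG : IsGraph E) {e e' : V × V}
    (h : ReflTransGen (Gamma E) e e') : ReflTransGen (Gamma E) e.swap e'.swap :=
  h.lift Prod.swap fun _ _ => Gamma.swap hG

theorem mem_of_reflTransGen_gamma {e e' : V × V} (he : e ∈ E)
    (h : ReflTransGen (Gamma E) e e') : e' ∈ E := by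
  induction h with
  | refl => exact he
  | tail _ hstep _ => exact hstep.2.1

/-- One forcing step of Golumbic's Triangle Lemma. -/
theorem Gamma.apex (hG : IsGraph E) {a b c b' c' : V} (hab : (a, b) ∈ E) (hac : (a, c) ∈ E)
    (h : Gamma E (b, c) (b', c')) :
    (ReflTransGen (Gamma E) (a, b) (a, b') ∧ ReflTransGen (Gamma E) (a, c) (a, c')) ∨
      Gamma E (a, b) (c', b') ∨ Gamma E (a, c) (b', c') := by
  obtain ⟨-, hE, ⟨rfl, hcc'⟩ | ⟨rfl, hbb'⟩⟩ := h
  · by_cases hac' : (a, c') ∈ E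
    · exact .inl ⟨.refl, .single ⟨hac, hac', .inl ⟨rfl, hcc'⟩⟩⟩
    · exact .inr (.inl ⟨hab, (hG.2 _ _).mp hE, .inr ⟨rfl, hac'⟩⟩)
  · by_cases hab' : (a, b') ∈ E
    · exact .inl ⟨.single ⟨hab, hab', .inl ⟨rfl, hbb'⟩⟩, .refl⟩
    · exact .inr (.inr ⟨hac, hE, .inr ⟨rfl, hab'⟩⟩)

end Forcing

namespace IsTransOrientation

variable {V : Type*} {F T : Set (V × V)}

theorem inv (hT : IsTransOrientation F T) : IsTransOrientation F (inv T) := by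
  obtain ⟨-, hdisj, hcover, htrans⟩ := hT
  refine ⟨hcover ▸ Set.subset_union_right, ?_, ?_, fun a b c hab hbc => htrans c b a hbc hab⟩
  · rw [Set.inter_comm]; exact hdisj
  · rw [Set.union_comm]; exact hcover

theorem mem_of_gamma {E : Set (V × V)} (hT : IsTransOrientation F T) (hFE : F ⊆ E)
    {p q : V × V} (hp : p ∈ T) (hpq : Gamma E p q) (hq : q ∈ F) : q ∈ T := by
  obtain ⟨-, -, hcover, htrans⟩ := hT
  obtain ⟨a, b⟩ := p
  obtain ⟨a', b'⟩ := q
  rcases (hcover ▸ hq : (a', b') ∈ T ∪ TransOrient.inv T) with hq | hq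
  · exact hq
  obtain ⟨-, -, ⟨rfl, hbb'⟩ | ⟨rfl, haa'⟩⟩ := hpq
  · have hb'b : (b', b) ∈ T := htrans _ _ _ hq hp
    exact absurd (hFE (hcover ▸ Or.inr hb'b)) hbb'
  · exact absurd (hFE (hcover ▸ Or.inl (htrans _ _ _ hp hq))) haa'

end IsTransOrientation

namespace IsImplicationClass

variable {V : Type*} {E A : Set (V × V)}

theorem nonempty (hA : IsImplicationClass E A) : A.Nonempty := by
  obtain ⟨e, -, rfl⟩ := hA
  exact ⟨e, .refl⟩

theorem subset (hA : IsImplicationClass E A) : A ⊆ E := by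
  obtain ⟨e, he, rfl⟩ := hA
  exact fun _ => mem_of_reflTransGen_gamma he

theorem mem_iff (hG : IsGraph E) (hA : IsImplicationClass E A) {p q : V × V} (hp : p ∈ A) :
    q ∈ A ↔ ReflTransGen (Gamma E) p q := by
  obtain ⟨e, -, rfl⟩ := hA
  exact ⟨fun hq => (reflTransGen_gamma_symm hG hp).trans hq, hp.trans⟩

theorem inv_eq_of_inter_nonempty (hG : IsGraph E) (hA : IsImplicationClass E A)
    (hmeet : (A ∩ inv A).Nonempty) : inv A = A := by
  obtain ⟨p, hp, hp'⟩ := hmeet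
  have hswap : ∀ q ∈ A, q.swap ∈ A := fun q hq =>
    (hA.mem_iff hG hp').2 (reflTransGen_gamma_swap hG ((hA.mem_iff hG hp).1 hq))
  exact Set.ext fun q => ⟨hswap q.swap, hswap q⟩

theorem mem_of_reflTransGen (hA : IsImplicationClass E A) {p q : V × V} (hp : p ∈ A)
    (h : ReflTransGen (Gamma E) p q) : q ∈ A := by
  obtain ⟨e, -, rfl⟩ := hA
  exact hp.trans h

theorem edge_mem_of_mem_of_mem (hG : IsGraph E) (hA : IsImplicationClass E A)
    (hdisj : A ∩ inv A = ∅) {a b c : V} (hab : (a, b) ∈ A) (hbc : (b, c) ∈ A) : (a, c) ∈ E := by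
  by_contra hac
  have hcb : (c, b) ∈ A := hA.mem_of_reflTransGen hab
    (.single ⟨hA.subset hab, (hG.2 _ _).mp (hA.subset hbc), .inr ⟨rfl, hac⟩⟩)
  exact hdisj.subset ⟨hbc, hcb⟩

theorem apex_reflTransGen (hG : IsGraph E) (hA : IsImplicationClass E A) (hdisj : A ∩ inv A = ∅)
    {a b c : V} (hab : (a, b) ∈ A) (hbc : (b, c) ∈ A) (hac : (a, c) ∈ E) (hacA : (a, c) ∉ A)
    {p : V × V} (hp : ReflTransGen (Gamma E) (b, c) p) :
    (a, p.1) ∈ A ∧ ReflTransGen (Gamma E) (a, c) (a, p.2) := by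
  induction hp with
  | refl => exact ⟨hab, .refl⟩
  | @tail p' p'' hp' hstep ih =>
    obtain ⟨b', c'⟩ := p'
    obtain ⟨b'', c''⟩ := p''
    have hp''A : (b'', c'') ∈ A := hA.mem_of_reflTransGen hbc (hp'.tail hstep)
    rcases Gamma.apex hG (hA.subset ih.1) (mem_of_reflTransGen_gamma hac ih.2) hstep with
      ⟨hb, hc⟩ | hforce | hforce
    · exact ⟨hA.mem_of_reflTransGen ih.1 hb, ih.2.trans hc⟩
    · exact (hdisj.subset ⟨hp''A, hA.mem_of_reflTransGen ih.1 (.single hforce)⟩).elim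
    · exact (hacA ((hA.mem_iff hG hp''A).2 (reflTransGen_gamma_symm hG (ih.2.tail hforce)))).elim

theorem trans_of_inter_eq_empty (hG : IsGraph E) (hA : IsImplicationClass E A)
    (hdisj : A ∩ inv A = ∅) {a b c : V} (hab : (a, b) ∈ A) (hbc : (b, c) ∈ A) : (a, c) ∈ A := by
  by_contra hacA
  have hloop := (hA.apex_reflTransGen hG hdisj hab hbc
    (hA.edge_mem_of_mem_of_mem hG hdisj hab hbc) hacA ((hA.mem_iff hG hbc).1 hab)).1
  exact hG.1 a (hA.subset hloop)

theorem isTransOrientation_of_inter_eq_empty (hG : IsGraph E) (hA : IsImplicationClass E A)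
    (hdisj : A ∩ inv A = ∅) : IsTransOrientation (hat A) A :=
  ⟨Set.subset_union_left, hdisj, rfl, fun _ _ _ => hA.trans_of_inter_eq_empty hG hdisj⟩

theorem subset_of_isTransOrientation (hG : IsGraph E) (hA : IsImplicationClass E A)
    {F T : Set (V × V)} (hT : IsTransOrientation F T) (hAF : A ⊆ F) (hFE : F ⊆ E)
    (hmeet : (A ∩ T).Nonempty) : A ⊆ T := by
  obtain ⟨f, hfA, hfT⟩ := hmeet
  suffices ∀ q, ReflTransGen (Gamma E) f q → q ∈ T from
    fun q hq => this q ((hA.mem_iff hG hfA).1 hq)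
  intro q hq
  induction hq with
  | refl => exact hfT
  | tail hq' hstep ih =>
    exact hT.mem_of_gamma hFE ih hstep (hAF (hA.mem_of_reflTransGen hfA (hq'.tail hstep)))

theorem not_exists_isTransOrientation_of_inv_eq (hG : IsGraph E) (hA : IsImplicationClass E A)
    (hinv : inv A = A) : ¬ ∃ T : Set (V × V), IsTransOrientation A T := by
  rintro ⟨T, hT⟩
  have hswap : ∀ p ∈ A, p.swap ∈ A := fun p hp => (hinv.symm ▸ hp : p ∈ inv A)
  obtain ⟨e, he⟩ := hA.nonempty
  obtain ⟨f, hfA, hfT⟩ : ∃ f ∈ A, f ∈ T := by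
    rcases (hT.2.2.1.symm ▸ he : e ∈ T ∪ inv T) with h | h
    · exact ⟨e, he, h⟩
    · exact ⟨e.swap, hswap e he, h⟩
  have hAT := hA.subset_of_isTransOrientation hG hT subset_rfl hA.subset ⟨f, hfA, hfT⟩
  exact hT.2.1.subset ⟨hfT, hAT (hswap f hfA)⟩

end IsImplicationClass

end TransOrient

open TransOrient in
/-- **(Theorem 2.4, Golumbic)** Exactly one of the two alternatives holds for an
implication class `A`: either `A = A⁻¹ = Â` and `Â` admits no transitive
orientation, or `A ∩ A⁻¹ = ∅` and `A`, `A⁻¹` are transitive orientations of `Â`. -/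
theorem golumbic_implication_class_dichotomy
    {V : Type*} (E : Set (V × V)) (hG : IsGraph E)
    (A : Set (V × V)) (hA : IsImplicationClass E A) :
    Xor'
      (A = inv A ∧ A = hat A ∧ ¬ ∃ E' : Set (V × V), IsTransOrientation (hat A) E')
      (A ∩ inv A = ∅ ∧ IsTransOrientation (hat A) A ∧ IsTransOrientation (hat A) (inv A)) := by
  rcases (A ∩ inv A).eq_empty_or_nonempty with hdisj | hmeet
  · have hT := hA.isTransOrientation_of_inter_eq_empty hG hdisj
    refine .inr ⟨⟨hdisj, hT, hT.inv⟩, fun ⟨hinv, _⟩ => ?_⟩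
    obtain ⟨e, he⟩ := hA.nonempty
    exact hdisj.subset ⟨he, hinv ▸ he⟩
  · have hinv := hA.inv_eq_of_inter_nonempty hG hmeet
    have hhat : hat A = A := by rw [hat, hinv, Set.union_self]
    refine .inl ⟨⟨hinv.symm, hhat.symm, ?_⟩, fun h => hmeet.ne_empty h.1⟩
    rw [hhat]
    exact hA.not_exists_isTransOrientation_of_inv_eq hG hinv
end

section
/- (Proposition 2.6) If Â is a color class of an undirected graph G = (V,E), then the set Ã of vertices incident to an edge of Â is a partitive set of G. -/
open Set

namespace TransOrient

variable {V : Type*}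

lemma mem_E_of_rtg {E : Set (V × V)} {e f : V × V} (heE : e ∈ E)
    (h : Relation.ReflTransGen (Gamma E) e f) : f ∈ E := by
  induction h with
  | refl => exact heE
  | tail _ hg _ => exact hg.2.1

/-- Within an edge of the implication class of `e`, adjacency to an outside
vertex `c` is the same at both endpoints. -/
lemma endpoints_adj_iff {E : Set (V × V)} (hG : IsGraph E) {e : V × V} (heE : e ∈ E)
    {c : V} (hc : c ∉ tilde (hat {e' | Relation.ReflTransGen (Gamma E) e e'}))
    {f : V × V} (hf : Relation.ReflTransGen (Gamma E) e f) :
    ((f.1, c) ∈ E ↔ (f.2, c) ∈ E) := by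
  have hfE : f ∈ E := mem_E_of_rtg heE hf
  constructor
  · intro h1
    by_contra h2
    apply hc
    refine ⟨f.1, Or.inr (Or.inl ?_)⟩
    exact hf.tail ⟨hfE, h1, Or.inl ⟨rfl, h2⟩⟩
  · intro h2
    by_contra h1
    apply hc
    refine ⟨f.2, Or.inl (Or.inl ?_)⟩
    exact hf.tail ⟨hfE, (hG.2 f.2 c).mp h2, Or.inr ⟨rfl, h1⟩⟩

/-- Adjacency to an outside vertex `c` is constant on the vertices of the
implication class of `e`. -/
lemma adj_const {E : Set (V × V)} (hG : IsGraph E) {e : V × V} (heE : e ∈ E)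
    {c : V} (hc : c ∉ tilde (hat {e' | Relation.ReflTransGen (Gamma E) e e'}))
    {f : V × V} (hf : Relation.ReflTransGen (Gamma E) e f) :
    ((f.1, c) ∈ E ↔ (e.1, c) ∈ E) ∧ ((f.2, c) ∈ E ↔ (e.1, c) ∈ E) := by
  induction hf with
  | refl => exact ⟨Iff.rfl, (endpoints_adj_iff hG heE hc Relation.ReflTransGen.refl).symm⟩
  | @tail f g hef hfg ih =>
    have hg : Relation.ReflTransGen (Gamma E) e g := hef.tail hfg
    have hend := endpoints_adj_iff hG heE hc hg
    rcases hfg.2.2 with ⟨h1, _⟩ | ⟨h2, _⟩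
    · exact ⟨h1 ▸ ih.1, hend.symm.trans (h1 ▸ ih.1)⟩
    · exact ⟨hend.trans (h2 ▸ ih.2), h2 ▸ ih.2⟩

end TransOrient
open TransOrient in
/-- **(Proposition 2.6)** If `Â` is a color class of `G`, then the set `Ã` of
vertices incident to an edge of `Â` is a partitive set of `G`. -/
theorem tilde_of_color_class_isPartitive
    {V : Type*} (E : Set (V × V)) (hG : IsGraph E)
    (A : Set (V × V)) (hA : IsImplicationClass E A) :
    IsPartitive E (tilde (hat A)) := by
  obtain ⟨e, heE, rfl⟩ := hA
  intro a ha b hb c hc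
  have key : ∀ v, v ∈ tilde (hat {e' | Relation.ReflTransGen (Gamma E) e e'}) →
      ((v, c) ∈ E ↔ (e.1, c) ∈ E) := by
    rintro v ⟨w, hvw | hwv⟩
    · rcases hvw with h | h
      · exact (adj_const hG heE hc h).1
      · exact (adj_const hG heE hc h).2
    · rcases hwv with h | h
      · exact (adj_const hG heE hc h).2
      · exact (adj_const hG heE hc h).1
  exact (key a ha).trans (key b hb).symm
end
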